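/- arXiv:2508.07039 — 3 statements merged into one kernel-verified Lean document; each statement's English description precedes it below -/
import Mathlib

section
/- Let 1 < p < 2, and for ε > 0 define δ(ε,p) = sqrt( (1/2)·((p-1)/(2ε))^{2/(2-p)} + 1/2 ) − 1. Then for every k > 0 there exists ε_{p,k} > 0 such that for all real numbers a, b: 2kp|a|^{p-1}|b|·1_{|b| ≥ δ(ε_{p,k},p)|a|} + p·ε_{p,k}·|a|^{p-2}|b|²·1_{|b| < δ(ε_{p,k},p)|a|} ≤ |a+b|^p − |a|^p − p|a|^{p-2}·a·b·1_{a ≠ 0}. -/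
open Set Filter

noncomputable def deltaEps (ε p : ℝ) : ℝ :=
  Real.sqrt ((1 / 2) * ((p - 1) / (2 * ε)) ^ ((2 : ℝ) / (2 - p)) + 1 / 2) - 1

/-!
On `[-R, R]` the function `|x| ^ p` is `p (p - 1) R ^ (p - 2)`-strongly convex: its derivative
`p |x| ^ (p - 2) x` is odd, with slope `p (p - 1) x ^ (p - 2) ≥ p (p - 1) R ^ (p - 2)` on `(0, R]`.
With `R = (1 + δ) |a|` this bounds the remainder `|a + b| ^ p - |a| ^ p - p |a| ^ (p - 2) a b`
below by `p ε |a| ^ (p - 2) b ^ 2` whenever `|b| ≤ δ |a|` and `2 ε ≤ (p - 1) (1 + δ) ^ (p - 2)`.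
When `|b| ≥ T |a|` the remainder is at least `|b| ^ p / 2 ^ p - (1 + p) |a| ^ (p - 1) |b|`, which
dominates `2 k p |a| ^ (p - 1) |b|` once `T` is large. Since `deltaEps ε p → ∞` as `ε → 0`, we fix
such a `T` and take the `ε` with `deltaEps ε p = T`; it satisfies the smallness condition for
`δ = T`.
-/

theorem ConvexOn.add_mul_sub_le_of_hasDerivAt {S : Set ℝ} {f : ℝ → ℝ} {x y f' : ℝ}
    (hf : ConvexOn ℝ S f) (hx : x ∈ S) (hy : y ∈ S) (hf' : HasDerivAt f f' x) :
    f x + f' * (y - x) ≤ f y := by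
  rcases lt_trichotomy x y with hxy | rfl | hxy
  · have := hf.le_slope_of_hasDerivAt hx hy hxy hf'
    rw [slope_def_field, le_div_iff₀ (sub_pos.2 hxy)] at this
    linarith
  · simp
  · have := hf.slope_le_of_hasDerivAt hy hx hxy hf'
    rw [slope_def_field, div_le_iff₀ (sub_pos.2 hxy)] at this
    linarith

theorem StrongConvexOn.add_mul_sub_add_sq_le_of_hasDerivAt {S : Set ℝ} {f : ℝ → ℝ}
    {m x y f' : ℝ} (hf : StrongConvexOn S m f) (hx : x ∈ S) (hy : y ∈ S)
    (hf' : HasDerivAt f f' x) : f x + f' * (y - x) + m / 2 * (y - x) ^ 2 ≤ f y := by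
  have hg' : HasDerivAt (fun z => f z - m / 2 * ‖z‖ ^ 2) (f' - m * x) x := by
    simp only [Real.norm_eq_abs, sq_abs]
    exact (hf'.sub ((hasDerivAt_pow 2 x).const_mul (m / 2))).congr_deriv (by ring)
  have := (strongConvexOn_iff_convex.1 hf).add_mul_sub_le_of_hasDerivAt hx hy hg'
  simp only [Real.norm_eq_abs, sq_abs] at this
  linear_combination this

section

variable {p : ℝ}

lemma monotoneOn_mul_rpow_sub_one_sub_mul (hp1 : 1 < p) (hp2 : p ≤ 2) {R c : ℝ}
    (hc : c ≤ p * (p - 1) * R ^ (p - 2)) :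
    MonotoneOn (fun z : ℝ => p * z ^ (p - 1) - c * z) (Icc 0 R) := by
  refine monotoneOn_of_hasDerivWithinAt_nonneg (f' := fun z => p * ((p - 1) * z ^ (p - 2)) - c)
    (convex_Icc 0 R) ?_ (fun z hz => ?_) (fun z hz => ?_)
  · exact ((continuousOn_id.rpow_const fun _ _ => Or.inr (by linarith)).const_smul p).sub
      (continuousOn_const.mul continuousOn_id)
  · rw [interior_Icc] at hz
    have hpow := Real.hasDerivAt_rpow_const (x := z) (p := p - 1) (Or.inl hz.1.ne')
    rw [show p - 1 - 1 = p - 2 by ring] at hpow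
    exact ((hpow.const_mul p).sub ((hasDerivAt_id z).const_mul c)).hasDerivWithinAt.congr_deriv
      (by simp)
  · rw [interior_Icc] at hz
    have h_pow := Real.rpow_le_rpow_of_nonpos hz.1 hz.2.le (by linarith : p - 2 ≤ 0)
    have h_coeff : 0 < p * (p - 1) := by nlinarith
    nlinarith

lemma monotoneOn_mul_abs_rpow_mul_sub_mul (hp1 : 1 < p) (hp2 : p ≤ 2) {R c : ℝ} (hR : 0 ≤ R)
    (hc : c ≤ p * (p - 1) * R ^ (p - 2)) :
    MonotoneOn (fun z : ℝ => p * |z| ^ (p - 2) * z - c * z) (Icc (-R) R) := by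
  set g := fun z : ℝ => p * |z| ^ (p - 2) * z - c * z
  have g_neg (z : ℝ) : g (-z) = -g z := by simp only [g, abs_neg]; ring
  have mono_pos : MonotoneOn g (Icc 0 R) := by
    refine (monotoneOn_mul_rpow_sub_one_sub_mul hp1 hp2 hc).congr fun z hz => ?_
    simp only [g, abs_of_nonneg hz.1, mul_assoc,
      ← Real.rpow_add_one' hz.1 (by linarith : p - 2 + 1 ≠ 0)]
    ring_nf
  have mono_neg : MonotoneOn g (Icc (-R) 0) := fun x hx y hy hxy => by
    have := mono_pos ⟨neg_nonneg.2 hy.2, neg_le.1 hy.1⟩ ⟨neg_nonneg.2 hx.2, neg_le.1 hx.1⟩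
      (neg_le_neg hxy)
    rw [g_neg, g_neg] at this
    linarith
  rw [← Icc_union_Icc_eq_Icc (neg_nonpos.2 hR) hR]
  exact mono_neg.union_right mono_pos (isGreatest_Icc (neg_nonpos.2 hR)) (isLeast_Icc hR)

lemma strongConvexOn_abs_rpow (hp1 : 1 < p) (hp2 : p ≤ 2) {R : ℝ} (hR : 0 ≤ R) :
    StrongConvexOn (Icc (-R) R) (p * (p - 1) * R ^ (p - 2)) (fun z : ℝ => |z| ^ p) := by
  set m := p * (p - 1) * R ^ (p - 2)
  have hderiv (z : ℝ) : HasDerivAt (fun z : ℝ => |z| ^ p - m / 2 * z ^ 2)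
      (p * |z| ^ (p - 2) * z - m * z) z :=
    ((hasDerivAt_abs_rpow z hp1).sub ((hasDerivAt_pow 2 z).const_mul (m / 2))).congr_deriv
      (by ring)
  simp only [strongConvexOn_iff_convex, Real.norm_eq_abs, sq_abs]
  refine MonotoneOn.convexOn_of_deriv (convex_Icc _ _)
    (fun z _ => (hderiv z).continuousAt.continuousWithinAt)
    (fun z _ => (hderiv z).differentiableAt.differentiableWithinAt) ?_
  rw [funext fun z => (hderiv z).deriv]
  exact (monotoneOn_mul_abs_rpow_mul_sub_mul hp1 hp2 hR le_rfl).mono interior_subset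

lemma abs_rpow_add_mul_sub_add_sq_le (hp1 : 1 < p) (hp2 : p ≤ 2) {R x y : ℝ}
    (hx : |x| ≤ R) (hy : |y| ≤ R) :
    |x| ^ p + p * |x| ^ (p - 2) * x * (y - x) + p * (p - 1) * R ^ (p - 2) / 2 * (y - x) ^ 2
      ≤ |y| ^ p :=
  (strongConvexOn_abs_rpow hp1 hp2 ((abs_nonneg x).trans hx)).add_mul_sub_add_sq_le_of_hasDerivAt
    (abs_le.1 hx) (abs_le.1 hy) (hasDerivAt_abs_rpow x hp1)

lemma mul_abs_rpow_mul_sq_le_of_abs_le (hp1 : 1 < p) (hp2 : p ≤ 2) {δ ε a b : ℝ} (hδ : 0 ≤ δ)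
    (hε : 2 * ε ≤ (p - 1) * (1 + δ) ^ (p - 2)) (hab : |b| ≤ δ * |a|) :
    p * ε * |a| ^ (p - 2) * b ^ 2 ≤ |a + b| ^ p - |a| ^ p - p * |a| ^ (p - 2) * a * b := by
  have hx : |a| ≤ (1 + δ) * |a| := by nlinarith [abs_nonneg a]
  have hy : |a + b| ≤ (1 + δ) * |a| := by linarith [abs_add_le a b]
  have key := abs_rpow_add_mul_sub_add_sq_le hp1 hp2 hx hy
  rw [add_sub_cancel_left, Real.mul_rpow (by linarith) (abs_nonneg a)] at key
  have : 0 ≤ p * |a| ^ (p - 2) * b ^ 2 := by positivity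
  nlinarith

lemma abs_rpow_sub_one_mul_abs (hp : p ≠ 0) (x : ℝ) : |x| ^ (p - 1) * |x| = |x| ^ p := by
  rw [← Real.rpow_add_one' (abs_nonneg x) (by simpa using hp), sub_add_cancel]

lemma rpow_div_sub_mul_le_of_two_mul_abs_le (hp1 : 1 < p) {a b : ℝ} (hab : 2 * |a| ≤ |b|) :
    |b| ^ p / 2 ^ p - (1 + p) * |a| ^ (p - 1) * |b|
      ≤ |a + b| ^ p - |a| ^ p - p * |a| ^ (p - 2) * a * b := by
  have hb : |b| / 2 ≤ |a + b| := by
    have := abs_add_le (a + b) (-a)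
    rw [add_neg_cancel_comm, abs_neg] at this
    linarith
  have h_sum : |b| ^ p / 2 ^ p ≤ |a + b| ^ p := by
    rw [← Real.div_rpow (abs_nonneg b) zero_le_two]
    exact Real.rpow_le_rpow (by positivity) hb (by linarith)
  have h_pow : |a| ^ p ≤ |a| ^ (p - 1) * |b| := by
    rw [← abs_rpow_sub_one_mul_abs (by linarith) a]
    exact mul_le_mul_of_nonneg_left (by linarith [abs_nonneg a]) (by positivity)
  have h_lin : p * |a| ^ (p - 2) * a * b ≤ p * |a| ^ (p - 1) * |b| := by
    have : |a| ^ (p - 2) * |a| = |a| ^ (p - 1) := by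
      simpa [show p - 1 - 1 = p - 2 by ring] using
        abs_rpow_sub_one_mul_abs (p := p - 1) (by linarith) a
    calc p * |a| ^ (p - 2) * a * b = p * |a| ^ (p - 2) * (a * b) := by ring
      _ ≤ p * |a| ^ (p - 2) * (|a| * |b|) :=
        mul_le_mul_of_nonneg_left (abs_mul a b ▸ le_abs_self _) (by positivity)
      _ = p * |a| ^ (p - 1) * |b| := by rw [← this]; ring
  linarith

lemma mul_rpow_sub_one_mul_le_of_mul_abs_le (hp1 : 1 < p) {k T a b : ℝ} (hT : 2 ≤ T)
    (hTk : 2 ^ p * (1 + p * (1 + 2 * k)) ≤ T ^ (p - 1)) (hab : T * |a| ≤ |b|) :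
    2 * k * p * |a| ^ (p - 1) * |b| ≤ |a + b| ^ p - |a| ^ p - p * |a| ^ (p - 2) * a * b := by
  have key := rpow_div_sub_mul_le_of_two_mul_abs_le hp1
    (le_trans (mul_le_mul_of_nonneg_right hT (abs_nonneg a)) hab)
  have h_pow : 2 ^ p * (1 + p * (1 + 2 * k)) * |a| ^ (p - 1) ≤ |b| ^ (p - 1) :=
    calc 2 ^ p * (1 + p * (1 + 2 * k)) * |a| ^ (p - 1) ≤ T ^ (p - 1) * |a| ^ (p - 1) := by
          gcongr
      _ = (T * |a|) ^ (p - 1) := (Real.mul_rpow (by linarith) (abs_nonneg a)).symm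
      _ ≤ |b| ^ (p - 1) := Real.rpow_le_rpow (by positivity) hab (by linarith)
  have : (1 + p * (1 + 2 * k)) * |a| ^ (p - 1) * |b| ≤ |b| ^ p / 2 ^ p := by
    rw [le_div_iff₀ (by positivity), ← abs_rpow_sub_one_mul_abs (by linarith) b]
    nlinarith [abs_nonneg b]
  linarith

lemma exists_deltaEps_eq (hp1 : 1 < p) (hp2 : p < 2) {T : ℝ} (hT : 0 ≤ T) :
    ∃ ε, 0 < ε ∧ deltaEps ε p = T ∧ 2 * ε ≤ (p - 1) * (1 + T) ^ (p - 2) := by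
  have hp1' : p - 1 ≠ 0 := by linarith
  have hp2' : 2 - p ≠ 0 := by linarith
  set M := 2 * (1 + T) ^ 2 - 1
  have hM : (1 + T) ^ 2 ≤ M := by nlinarith
  have hM0 : 0 < M := by nlinarith
  have hMpow : 0 < M ^ ((p - 2) / 2) := Real.rpow_pos_of_pos hM0 _
  -- the solution of `deltaEps ε p = T`
  refine ⟨(p - 1) / 2 * M ^ ((p - 2) / 2), by positivity, ?_, ?_⟩
  · have : (p - 1) / (2 * ((p - 1) / 2 * M ^ ((p - 2) / 2))) = M ^ (-((p - 2) / 2)) := by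
      rw [Real.rpow_neg hM0.le]
      field_simp
    rw [deltaEps, this, ← Real.rpow_mul hM0.le,
      show -((p - 2) / 2) * (2 / (2 - p)) = 1 by field_simp; ring, Real.rpow_one,
      show 1 / 2 * M + 1 / 2 = (1 + T) ^ 2 by ring, Real.sqrt_sq (by linarith)]
    ring
  · rw [show (p - 1) * (1 + T) ^ (p - 2) = (p - 1) * ((1 + T) ^ 2) ^ ((p - 2) / 2) by
      rw [← Real.rpow_natCast, ← Real.rpow_mul (by linarith)]; push_cast; ring_nf]
    have := Real.rpow_le_rpow_of_nonpos (by positivity) hM (by linarith : (p - 2) / 2 ≤ 0)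
    nlinarith

end

theorem kruse_popier_lemma5_general (p : ℝ) (hp1 : 1 < p) (hp2 : p < 2) (k : ℝ) :
    ∃ ε : ℝ, 0 < ε ∧ ∀ a b : ℝ,
      2 * k * p * |a| ^ (p - 1) * |b| * (if deltaEps ε p * |a| ≤ |b| then 1 else 0)
        + p * ε * |a| ^ (p - 2) * b ^ 2 * (if |b| < deltaEps ε p * |a| then 1 else 0)
      ≤ |a + b| ^ p - |a| ^ p - p * |a| ^ (p - 2) * a * b * (if a ≠ 0 then 1 else 0) := by
  obtain ⟨T, hT2, hTk⟩ : ∃ T : ℝ, 2 ≤ T ∧ 2 ^ p * (1 + p * (1 + 2 * k)) ≤ T ^ (p - 1) :=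
    ((eventually_ge_atTop 2).and
      ((tendsto_rpow_atTop (by linarith)).eventually_ge_atTop _)).exists
  obtain ⟨ε, hε, hδ, hεT⟩ := exists_deltaEps_eq hp1 hp2 (by linarith : (0 : ℝ) ≤ T)
  refine ⟨ε, hε, fun a b => ?_⟩
  have h_ind : p * |a| ^ (p - 2) * a * b * (if a ≠ 0 then 1 else 0)
      = p * |a| ^ (p - 2) * a * b := by
    split_ifs with ha <;> simp_all
  rw [hδ, h_ind]
  rcases le_or_gt (T * |a|) |b| with hab | hab
  · rw [if_pos hab, if_neg hab.not_gt, mul_one, mul_zero, add_zero]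
    exact mul_rpow_sub_one_mul_le_of_mul_abs_le hp1 hT2 hTk hab
  · rw [if_neg hab.not_ge, if_pos hab, mul_one, mul_zero, zero_add]
    exact mul_abs_rpow_mul_sq_le_of_abs_le hp1 hp2.le (by linarith) hεT hab.le

theorem kruse_popier_lemma5 (p : ℝ) (hp1 : 1 < p) (hp2 : p < 2) (k : ℝ) (hk : 0 < k) :
    ∃ ε : ℝ, 0 < ε ∧ ∀ a b : ℝ,
      2 * k * p * |a| ^ (p - 1) * |b| * (if deltaEps ε p * |a| ≤ |b| then 1 else 0)
        + p * ε * |a| ^ (p - 2) * b ^ 2 * (if |b| < deltaEps ε p * |a| then 1 else 0)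
      ≤ |a + b| ^ p - |a| ^ p - p * |a| ^ (p - 2) * a * b * (if a ≠ 0 then 1 else 0) :=
  kruse_popier_lemma5_general p hp1 hp2 k
end

section
/- Let p ∈ (1,2), c(p) = p(p-1)/2. For all real numbers x and h with |x| ∨ |x+h| ≠ 0: |x+h|^p − |x|^p − p|x|^{p-1}·sign(x)·h ≥ c(p)·h²·(|x|² ∨ |x+h|²)^{(p-2)/2}, where sign(x) = x/|x| for x ≠ 0 and sign(0) = 0. -/
noncomputable def rsign (x : ℝ) : ℝ := if x = 0 then 0 else x / |x|

/-! With `M = max |x| |x + h|`, the function `G y = |y| ^ p - p (p - 1) / 2 * M ^ (p - 2) * y ^ 2`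
is convex on `[-M, M]`: its derivative is `p` times the odd function
`|y| ^ (p - 2) * y - (p - 1) * M ^ (p - 2) * y`, which increases on `[0, M]` because there
`y ^ (p - 2) ≥ M ^ (p - 2)` (as `p ≤ 2`). The theorem is the tangent-line inequality
`G x + G' x * h ≤ G (x + h)`, in which the quadratic terms leave exactly
`p (p - 1) / 2 * M ^ (p - 2) * h ^ 2`. -/

open Real Set

lemma abs_rpow_sub_two_mul (p x : ℝ) : |x| ^ (p - 2) * x = |x| ^ (p - 1) * rsign x := by
  rcases eq_or_ne x 0 with rfl | hx
  · simp [rsign]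
  · have hx' : |x| ≠ 0 := abs_ne_zero.mpr hx
    rw [rsign, if_neg hx, show p - 1 = p - 2 + 1 by ring, rpow_add_one hx']
    field_simp

lemma max_sq_rpow_half (a b q : ℝ) : max (a ^ 2) (b ^ 2) ^ (q / 2) = max |a| |b| ^ q := by
  have hmax : max (a ^ 2) (b ^ 2) = max |a| |b| ^ 2 := by
    rcases le_total |a| |b| with hab | hab
    · rw [max_eq_right (sq_le_sq.mpr hab), max_eq_right hab, sq_abs]
    · rw [max_eq_left (sq_le_sq.mpr hab), max_eq_left hab, sq_abs]
  rw [hmax, ← rpow_natCast, ← rpow_mul (le_max_of_le_left (abs_nonneg a))]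
  ring_nf

namespace ConvexOn

lemma add_deriv_mul_sub_le {S : Set ℝ} {f : ℝ → ℝ} {f' x y : ℝ} (hf : ConvexOn ℝ S f)
    (hx : x ∈ S) (hy : y ∈ S) (hd : HasDerivAt f f' x) : f x + f' * (y - x) ≤ f y := by
  rcases lt_trichotomy x y with hxy | rfl | hyx
  · have := hf.le_slope_of_hasDerivAt hx hy hxy hd
    rw [slope_def_field, le_div_iff₀ (sub_pos.mpr hxy)] at this
    linarith
  · simp
  · have := hf.slope_le_of_hasDerivAt hy hx hyx hd
    rw [slope_def_field, div_le_iff₀ (sub_pos.mpr hyx)] at this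
    linarith

end ConvexOn

section

variable {p : ℝ}

lemma monotoneOn_rpow_sub_one_sub_mul (hp1 : 1 < p) (hp2 : p ≤ 2) (M : ℝ) :
    MonotoneOn (fun y : ℝ => y ^ (p - 1) - (p - 1) * M ^ (p - 2) * y) (Icc 0 M) := by
  have hd : ∀ y : ℝ, 0 < y →
      HasDerivAt (fun y : ℝ => y ^ (p - 1) - (p - 1) * M ^ (p - 2) * y)
        ((p - 1) * y ^ (p - 2) - (p - 1) * M ^ (p - 2)) y := fun y hy =>
    ((hasDerivAt_rpow_const (Or.inl hy.ne')).sub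
      ((hasDerivAt_id y).const_mul ((p - 1) * M ^ (p - 2)))).congr_deriv
      (by rw [show p - 1 - 1 = p - 2 by ring]; ring)
  refine monotoneOn_of_deriv_nonneg (convex_Icc 0 M) ?_ ?_ ?_
  · exact ((continuous_rpow_const (by linarith)).sub
      (continuous_const.mul continuous_id)).continuousOn
  · rw [interior_Icc]
    exact fun y hy => (hd y hy.1).differentiableAt.differentiableWithinAt
  · rw [interior_Icc]
    intro y hy
    rw [(hd y hy.1).deriv, ← mul_sub]
    exact mul_nonneg (by linarith)
      (sub_nonneg.mpr (rpow_le_rpow_of_nonpos hy.1 hy.2.le (by linarith)))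

lemma monotoneOn_abs_rpow_mul_self_sub_mul (hp1 : 1 < p) (hp2 : p ≤ 2) (M : ℝ) :
    MonotoneOn (fun y : ℝ => |y| ^ (p - 2) * y - (p - 1) * M ^ (p - 2) * y) (Icc (-M) M) := by
  set ψ := fun y : ℝ => |y| ^ (p - 2) * y - (p - 1) * M ^ (p - 2) * y
  have hodd : ∀ y, ψ (-y) = -ψ y := fun y => by simp only [ψ, abs_neg]; ring
  have hpos : MonotoneOn ψ (Icc 0 M) := by
    refine (monotoneOn_rpow_sub_one_sub_mul hp1 hp2 M).congr fun y hy => ?_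
    rcases hy.1.eq_or_lt with rfl | hy0
    · simp [zero_rpow (by linarith : p - 1 ≠ 0), ψ]
    · simp only [ψ, abs_of_pos hy0, ← rpow_add_one hy0.ne']
      ring_nf
  rcases lt_or_ge M 0 with hM | hM
  · rw [Icc_eq_empty (by linarith : ¬ -M ≤ M)]
    exact fun a ha => ha.elim
  have hneg : MonotoneOn ψ (Icc (-M) 0) := fun a ha b hb hab => by
    have := hpos ⟨neg_nonneg.mpr hb.2, neg_le.mp hb.1⟩ ⟨neg_nonneg.mpr ha.2, neg_le.mp ha.1⟩
      (neg_le_neg hab)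
    rw [hodd, hodd] at this
    linarith
  rw [← Icc_union_Icc_eq_Icc (neg_nonpos.mpr hM) hM]
  exact hneg.union_right hpos (isGreatest_Icc (neg_nonpos.mpr hM)) (isLeast_Icc hM)

lemma hasDerivAt_abs_rpow_sub_mul_sq (hp1 : 1 < p) (k y : ℝ) :
    HasDerivAt (fun y : ℝ => |y| ^ p - k * y ^ 2) (p * |y| ^ (p - 2) * y - k * (2 * y)) y := by
  exact ((hasDerivAt_abs_rpow y hp1).sub ((hasDerivAt_pow 2 y).const_mul k)).congr_deriv
    (by norm_num)

lemma convexOn_abs_rpow_sub_mul_sq (hp1 : 1 < p) (hp2 : p ≤ 2) (M : ℝ) :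
    ConvexOn ℝ (Icc (-M) M) (fun y : ℝ => |y| ^ p - p * (p - 1) / 2 * M ^ (p - 2) * y ^ 2) := by
  have hd := hasDerivAt_abs_rpow_sub_mul_sq hp1 (p * (p - 1) / 2 * M ^ (p - 2))
  have hderiv : deriv (fun y : ℝ => |y| ^ p - p * (p - 1) / 2 * M ^ (p - 2) * y ^ 2)
      = fun y => p * (|y| ^ (p - 2) * y - (p - 1) * M ^ (p - 2) * y) := by
    funext y
    rw [(hd y).deriv]
    ring
  refine MonotoneOn.convexOn_of_deriv (convex_Icc _ _)
    (fun y _ => (hd y).continuousAt.continuousWithinAt)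
    (fun y _ => (hd y).differentiableAt.differentiableWithinAt) ?_
  rw [hderiv, interior_Icc]
  exact fun a ha b hb hab => mul_le_mul_of_nonneg_left
    (monotoneOn_abs_rpow_mul_self_sub_mul hp1 hp2 M (Ioo_subset_Icc_self ha)
      (Ioo_subset_Icc_self hb) hab) (by linarith)

end

theorem taylor_remainder_lower_bound_general (p : ℝ) (hp1 : 1 < p) (hp2 : p < 2)
    (x h : ℝ) :
    (p * (p - 1) / 2) * h ^ 2 * (max (x ^ 2) ((x + h) ^ 2)) ^ ((p - 2) / 2)
      ≤ |x + h| ^ p - |x| ^ p - p * |x| ^ (p - 1) * rsign x * h := by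
  set M := max |x| |x + h|
  have hx : x ∈ Icc (-M) M := abs_le.mp (le_max_left _ _)
  have hxh : x + h ∈ Icc (-M) M := abs_le.mp (le_max_right _ _)
  have tangent := (convexOn_abs_rpow_sub_mul_sq hp1 hp2.le M).add_deriv_mul_sub_le hx hxh
    (hasDerivAt_abs_rpow_sub_mul_sq hp1 _ x)
  rw [max_sq_rpow_half]
  linear_combination tangent - p * h * abs_rpow_sub_two_mul p x

theorem taylor_remainder_lower_bound (p : ℝ) (hp1 : 1 < p) (hp2 : p < 2)
    (x h : ℝ) (hxh : max |x| |x + h| ≠ 0) :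
    (p * (p - 1) / 2) * h ^ 2 * (max (x ^ 2) ((x + h) ^ 2)) ^ ((p - 2) / 2)
      ≤ |x + h| ^ p - |x| ^ p - p * |x| ^ (p - 1) * rsign x * h :=
  taylor_remainder_lower_bound_general p hp1 hp2 x h
end

section
/- Let (f_n)_{n≥0} be a nondecreasing sequence of RCLL (right-continuous with left limits) functions on [0,T] converging pointwise to an RCLL function f, and suppose g is an RCLL function on [0,T] with f ≥ g pointwise. If in addition the left-limit processes satisfy (f_n)_− ↗ f_− pointwise, then sup_{t∈[0,T]} ((f_n)_{t−} − g_{t−})⁻ → 0 as n → ∞, where x⁻ = max(−x, 0) denotes the negative part. -/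
open Filter Set Topology

/-- Left limit on `[0,T]`, with the convention `f_{0-} := f 0`. -/
noncomputable def llim (f : ℝ → ℝ) (t : ℝ) : ℝ :=
  if t = 0 then f 0 else Function.leftLim f t

/-- `f` is RCLL (càdlàg) on `[0,T]` (`f_{0-} := f 0`). -/
def RCLLOn (f : ℝ → ℝ) (T : ℝ) : Prop :=
  (∀ t ∈ Ico (0:ℝ) T, Tendsto f (nhdsWithin t (Ioi t)) (nhds (f t))) ∧
  (∀ t ∈ Ioc (0:ℝ) T, Tendsto f (nhdsWithin t (Iio t)) (nhds (llim f t)))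

/- Fix `ε > 0`. At each `t`, pointwise convergence of `fn n` and of its left limits gives one
index `n` with `g < fn n + ε` both at `t` and in the left limit at `t`; right-continuity and
left limits spread this strict inequality to a neighbourhood of `t`, and then to the left limits
on that neighbourhood. Compactness of `[0,T]` and monotonicity in `n` of the left limits turn
these local indices into a single one. -/

theorem IsCompact.exists_forall_of_monotone_of_eventually_nhdsWithin {X ι : Type*}
    [TopologicalSpace X] [Nonempty ι] [Preorder ι] [IsDirectedOrder ι] {s : Set X}
    (hs : IsCompact s) {p : ι → X → Prop} (hp : ∀ x ∈ s, Monotone (p · x))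
    (hloc : ∀ x ∈ s, ∃ i, ∀ᶠ y in 𝓝[s] x, p i y) :
    ∃ i, ∀ x ∈ s, p i x := by
  classical
  choose! i hi using hloc
  obtain ⟨F, -, hcover⟩ := hs.elim_nhdsWithin_subcover (fun x => {y | p (i x) y}) hi
  obtain ⟨M, hM⟩ := (F.image i).exists_le
  refine ⟨M, fun y hy => ?_⟩
  obtain ⟨x, hxF, hxy⟩ := mem_iUnion₂.1 (hcover hy)
  exact hp y hy (hM _ (Finset.mem_image_of_mem i hxF)) hxy

theorem tendsto_iSup_zero_of_nonneg_of_eventually_le {ι : Type*} {F : ℕ → ι → ℝ}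
    (h0 : ∀ n i, 0 ≤ F n i) (hle : ∀ ε > 0, ∀ᶠ n in atTop, ∀ i, F n i ≤ ε) :
    Tendsto (fun n => ⨆ i, F n i) atTop (𝓝 0) :=
  tendsto_order.2
    ⟨fun _ ha => Eventually.of_forall fun n => ha.trans_le (Real.iSup_nonneg (h0 n)),
      fun _ ha => (hle _ (half_pos ha)).mono fun _ hn =>
        (Real.iSup_le hn (half_pos ha).le).trans_lt (half_lt_self ha)⟩

section RCLL

variable {T t ε : ℝ} {g h : ℝ → ℝ}

theorem llim_le_llim_add_of_eventually_le (hg : RCLLOn g T) (hh : RCLLOn h T)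
    (ht : t ∈ Icc 0 T) (hle : ∀ᶠ z in 𝓝[Icc 0 T] t, g z ≤ h z + ε) :
    llim g t ≤ llim h t + ε := by
  rcases ht.1.eq_or_lt with rfl | ht0
  · simpa [llim] using hle.self_of_nhdsWithin ht
  · have hLT : 𝓝[<] t ≤ 𝓝[Icc 0 T] t := by
      rw [← nhdsWithin_Ioo_eq_nhdsLT ht0]
      exact nhdsWithin_mono _ (Ioo_subset_Icc_self.trans (Icc_subset_Icc_right ht.2))
    exact le_of_tendsto_of_tendsto (hg.2 t ⟨ht0, ht.2⟩) ((hh.2 t ⟨ht0, ht.2⟩).add_const ε)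
      (hLT hle)

theorem eventually_nhdsWithin_lt_add_of_lt_add (hg : RCLLOn g T) (hh : RCLLOn h T)
    (ht : t ∈ Icc 0 T) (hlt : g t < h t + ε) (hlt_left : llim g t < llim h t + ε) :
    ∀ᶠ z in 𝓝[Icc 0 T] t, g z < h z + ε := by
  rw [← Ico_union_Icc_eq_Icc ht.1 ht.2, nhdsWithin_union, eventually_sup]
  constructor
  · rcases ht.1.eq_or_lt with rfl | ht0
    · simp
    · exact nhdsWithin_mono _ Ico_subset_Iio_self <|
        (hg.2 t ⟨ht0, ht.2⟩).eventually_lt ((hh.2 t ⟨ht0, ht.2⟩).add_const ε) hlt_left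
  · rcases ht.2.lt_or_eq with htT | rfl
    · have hright : ∀ {φ : ℝ → ℝ}, RCLLOn φ T → Tendsto φ (𝓝[≥] t) (𝓝 (φ t)) :=
        fun hφ => continuousWithinAt_Ioi_iff_Ici.1 (hφ.1 t ⟨ht.1, htT⟩)
      exact nhdsWithin_mono _ Icc_subset_Ici_self <|
        (hright hg).eventually_lt ((hright hh).add_const ε) hlt
    · simpa using hlt

end RCLL

theorem generalized_dini_general (T : ℝ) (fn : ℕ → ℝ → ℝ) (f g : ℝ → ℝ)
    (hfn_rcll : ∀ n, RCLLOn (fn n) T) (hf_rcll : RCLLOn f T) (hg_rcll : RCLLOn g T)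
    (hconv : ∀ t ∈ Icc (0:ℝ) T, Tendsto (fun n => fn n t) atTop (nhds (f t)))
    (hge : ∀ t ∈ Icc (0:ℝ) T, g t ≤ f t)
    (hleft_mono : ∀ t ∈ Icc (0:ℝ) T, Monotone fun n => llim (fn n) t)
    (hleft_conv : ∀ t ∈ Icc (0:ℝ) T,
      Tendsto (fun n => llim (fn n) t) atTop (nhds (llim f t))) :
    Tendsto (fun n => ⨆ t : Icc (0:ℝ) T, max (-(llim (fn n) t - llim g t)) 0)
      atTop (nhds 0) := by
  have hleft_ge : ∀ t ∈ Icc 0 T, llim g t ≤ llim f t := fun t ht => by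
    simpa using llim_le_llim_add_of_eventually_le (ε := 0) hg_rcll hf_rcll ht
      (eventually_nhdsWithin_of_forall fun z hz => by simpa using hge z hz)
  have hlocal : ∀ ε > 0, ∀ t ∈ Icc 0 T,
      ∃ n, ∀ᶠ y in 𝓝[Icc 0 T] t, llim g y ≤ llim (fn n) y + ε := by
    intro ε hε t ht
    obtain ⟨n, hn, hn_left⟩ := ((hconv t ht).eventually (lt_mem_nhds (sub_lt_self _ hε))).and
      ((hleft_conv t ht).eventually (lt_mem_nhds (sub_lt_self _ hε))) |>.exists
    have hnear := eventually_nhdsWithin_lt_add_of_lt_add (ε := ε) hg_rcll (hfn_rcll n) ht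
      (by linarith [hge t ht]) (by linarith [hleft_ge t ht])
    refine ⟨n, ?_⟩
    filter_upwards [eventually_eventually_nhdsWithin.2 hnear, self_mem_nhdsWithin] with y hy hyI
    exact llim_le_llim_add_of_eventually_le hg_rcll (hfn_rcll n) hyI (hy.mono fun _ => le_of_lt)
  refine tendsto_iSup_zero_of_nonneg_of_eventually_le (fun _ _ => le_max_right _ _)
    fun ε hε => ?_
  obtain ⟨N, hN⟩ := isCompact_Icc.exists_forall_of_monotone_of_eventually_nhdsWithin
    (p := fun n y => llim g y ≤ llim (fn n) y + ε)
    (fun t ht _ _ hmn hle => hle.trans (by linarith [hleft_mono t ht hmn])) (hlocal ε hε)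
  filter_upwards [eventually_ge_atTop N] with n hn t
  exact max_le (by linarith [hN t t.2, hleft_mono t t.2 hn]) hε.le

theorem generalized_dini (T : ℝ) (hT : 0 < T) (fn : ℕ → ℝ → ℝ) (f g : ℝ → ℝ)
    (hfn_rcll : ∀ n, RCLLOn (fn n) T) (hf_rcll : RCLLOn f T) (hg_rcll : RCLLOn g T)
    (hmono : ∀ t ∈ Icc (0:ℝ) T, Monotone fun n => fn n t)
    (hconv : ∀ t ∈ Icc (0:ℝ) T, Tendsto (fun n => fn n t) atTop (nhds (f t)))
    (hge : ∀ t ∈ Icc (0:ℝ) T, g t ≤ f t)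
    (hleft_mono : ∀ t ∈ Icc (0:ℝ) T, Monotone fun n => llim (fn n) t)
    (hleft_conv : ∀ t ∈ Icc (0:ℝ) T,
      Tendsto (fun n => llim (fn n) t) atTop (nhds (llim f t))) :
    Tendsto (fun n => ⨆ t : Icc (0:ℝ) T, max (-(llim (fn n) t - llim g t)) 0)
      atTop (nhds 0) :=
  generalized_dini_general T fn f g hfn_rcll hf_rcll hg_rcll hconv hge hleft_mono hleft_conv
end
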